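/- Let T^n_i be the rescaled trajectory of particle i in the interchange process on the path of length n, and let m_i(δ) = sup_{s,t ∈ [0,T], |s−t| ≤ δ} |T^n_i(t) − T^n_i(s)|. Then max_{1 ≤ i ≤ n} P(m_i(δ) > 2δ^{1/8}) ≤ 2⁷ T (δ^{1/2} + δ^{−1/2}/n²) for T ≥ 1 and 0 < δ ≤ 1. -/

import Mathlib

/-!
The folding map `π_n` is 1-Lipschitz, so an oscillation of `T^n_i` larger than `2 δ^{1/8}` over a
time lag at most `δ` forces the unfolded walk `S(n² ·)` to move by more than `x = δ^{1/8} n` away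
from its position at time `n² k δ`, within one of the `⌊T/δ⌋ + 1` windows `[k δ, (k + 2) δ]`.
Conditionally on the Poisson clock, this is the event that the discrete walk leaves `[-x, x]`
during its first `D` steps, `D` being the Poisson(`2 n² δ`) number of jumps in the window. Doob's
maximal inequality for the submartingale `S_m⁴`, together with `E S_m⁴ ≤ 3 m²`, bounds it by
`3 E[D²] / x⁴ = 3 ((2 n² δ)² + 2 n² δ) / x⁴`, and a union bound over the windows concludes.
-/

open MeasureTheory ProbabilityTheory

/-- The folding map `π_n : ℤ → {1,…,n}`. -/
def foldPath (n : ℕ) (x : ℤ) : ℤ :=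
  let y : ℤ := (x - 1) % (2 * n) + 1
  if y ≤ n then y else 2 * n + 1 - y

/-- `N` is a Poisson (counting) process of rate `r`. -/
def IsPoissonProcess {Ω : Type*} [MeasurableSpace Ω] (P : Measure Ω) (r : NNReal)
    (N : ℝ → Ω → ℕ) : Prop :=
  (∀ ω, N 0 ω = 0) ∧
  (∀ ω, Monotone fun t => N t ω) ∧
  (∀ t, Measurable (N t)) ∧
  (∀ s t : ℝ, 0 ≤ s → s ≤ t →
    Measure.map (fun ω => N t ω - N s ω) P
      = (poissonPMF (r * Real.toNNReal (t - s))).toMeasure) ∧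
  (∀ (k : ℕ) (t : ℕ → ℝ), (∀ i, 0 ≤ t i) → Monotone t →
    iIndepFun
      (fun i : Fin k => fun ω => N (t (i + 1)) ω - N (t i) ω) P)

open Finset

lemma Int.abs_sub_le_of_abs_succ_sub_le {f : ℤ → ℤ} (hf : ∀ x, |f (x + 1) - f x| ≤ 1) (a b : ℤ) :
    |f a - f b| ≤ |a - b| := by
  wlog hab : b ≤ a generalizing a b
  · rw [abs_sub_comm, abs_sub_comm a]
    exact this b a (by omega)
  induction a, hab using Int.leInduction with
  | base => simp
  | succ a hba ih =>
    calc |f (a + 1) - f b| ≤ |f (a + 1) - f a| + |f a - f b| := abs_sub_le _ _ _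
      _ ≤ 1 + |a - b| := add_le_add (hf a) ih
      _ = |a + 1 - b| := by rw [abs_of_nonneg (by omega), abs_of_nonneg (by omega)]; ring

lemma abs_foldPath_succ_sub_le (n : ℕ) (hn : 0 < n) (x : ℤ) :
    |foldPath n (x + 1) - foldPath n x| ≤ 1 := by
  have hm : (0 : ℤ) < 2 * n := by positivity
  set r : ℤ := (x - 1) % (2 * n) with hr
  have hr0 : 0 ≤ r := Int.emod_nonneg _ hm.ne'
  have hr1 : r < 2 * n := Int.emod_lt_of_pos _ hm
  have hsucc : (x + 1 - 1) % (2 * n) = (r + 1) % (2 * n) := by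
    rw [hr, Int.emod_add_emod]; ring_nf
  unfold foldPath
  dsimp only
  rw [hsucc, ← hr]
  rcases lt_or_eq_of_le (show r + 1 ≤ 2 * n by omega) with h | h
  · rw [Int.emod_eq_of_lt (by omega) h]
    split_ifs <;> rw [abs_le] <;> constructor <;> omega
  · rw [h, Int.emod_self]
    split_ifs <;> rw [abs_le] <;> constructor <;> omega

lemma abs_foldPath_sub_le (n : ℕ) (hn : 0 < n) (a b : ℤ) :
    |foldPath n a - foldPath n b| ≤ |a - b| :=
  Int.abs_sub_le_of_abs_succ_sub_le (abs_foldPath_succ_sub_le n hn) a b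

section Independence

variable {Ω : Type*} {mΩ : MeasurableSpace Ω} {P : Measure Ω}

lemma ProbabilityTheory.Indep.setIntegral_mul_eq {m m' : MeasurableSpace Ω} (hind : Indep m m' P)
    (hm : m ≤ mΩ) (hm' : m' ≤ mΩ) {f g : Ω → ℝ} (hf : Measurable[m] f) (hg : Measurable[m'] g)
    {s : Set Ω} (hs : MeasurableSet[m] s) :
    ∫ ω in s, f ω * g ω ∂P = (∫ ω in s, f ω ∂P) * ∫ ω, g ω ∂P := by
  have hfs : Measurable[m] (s.indicator f) := hf.indicator hs
  have hindep : IndepFun (s.indicator f) g P := (IndepFun_iff_Indep _ _ _).2 <|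
    indep_of_indep_of_le_right (indep_of_indep_of_le_left hind hfs.comap_le) hg.comap_le
  rw [← integral_indicator (hm _ hs), ← integral_indicator (hm _ hs)]
  simp_rw [Set.indicator_mul_left]
  exact hindep.integral_mul_eq_mul_integral (hfs.mono hm le_rfl).aestronglyMeasurable
    (hg.mono hm' le_rfl).aestronglyMeasurable

variable [IsFiniteMeasure P]

lemma ProbabilityTheory.Indep.setIntegral_add_pow {m : MeasurableSpace Ω}
    (hm : m ≤ mΩ) {Y R : Ω → ℝ} (hY : Measurable[m] Y) (hR : Measurable[mΩ] R)
    (hind : Indep m (MeasurableSpace.comap R inferInstance) P) {C D : ℝ}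
    (hYC : ∀ᵐ ω ∂P, |Y ω| ≤ C) (hRD : ∀ᵐ ω ∂P, |R ω| ≤ D) {s : Set Ω} (hs : MeasurableSet[m] s)
    (n : ℕ) :
    ∫ ω in s, (Y ω + R ω) ^ n ∂P
      = ∑ k ∈ range (n + 1), (∫ ω in s, Y ω ^ k ∂P) * (∫ ω, R ω ^ (n - k) ∂P) * n.choose k := by
  have hYm : Measurable[mΩ] Y := hY.mono hm le_rfl
  simp_rw [add_pow]
  rw [integral_finsetSum]
  · refine sum_congr rfl fun k _ => ?_
    rw [integral_mul_const, hind.setIntegral_mul_eq hm hR.comap_le (hY.pow_const k)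
      ((comap_measurable R).pow_const _) hs]
  · refine fun k _ =>
      (Integrable.of_bound (by fun_prop) (C ^ k * D ^ (n - k) * n.choose k) ?_).integrableOn
    filter_upwards [hYC, hRD] with ω hY hR
    rw [Real.norm_eq_abs, abs_mul, abs_mul, abs_pow, abs_pow, Nat.abs_cast]
    have hC : 0 ≤ C := (abs_nonneg _).trans hY
    have hD : 0 ≤ D := (abs_nonneg _).trans hR
    gcongr

end Independence

section RandomWalk

variable {Ω : Type*} {mΩ : MeasurableSpace Ω} {P : Measure Ω} {ξ : ℕ → Ω → ℝ}

def pastFiltration (ξ : ℕ → Ω → ℝ) (hξ : ∀ k, Measurable (ξ k)) : Filtration ℕ mΩ where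
  seq m := ⨆ k ∈ Set.Iio m, MeasurableSpace.comap (ξ k) inferInstance
  mono' _ _ h := biSup_mono fun _ hk => lt_of_lt_of_le hk h
  le' _ := iSup₂_le fun k _ => (hξ k).comap_le

lemma measurable_sum_range_pastFiltration (hξ : ∀ k, Measurable (ξ k)) (m : ℕ) :
    Measurable[pastFiltration ξ hξ m] fun ω => ∑ k ∈ range m, ξ k ω :=
  Finset.measurable_sum _ fun k hk => (comap_measurable (ξ k)).mono
    (le_iSup₂ (f := fun k (_ : k ∈ Set.Iio m) => MeasurableSpace.comap (ξ k) inferInstance) k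
      (Finset.mem_range.1 hk)) le_rfl

lemma indep_pastFiltration (hξ : ∀ k, Measurable (ξ k)) (hind : iIndepFun ξ P) (m : ℕ) :
    Indep (pastFiltration ξ hξ m) (MeasurableSpace.comap (ξ m) inferInstance) P :=
  indep_of_indep_of_le_right
    (indep_iSup_of_disjoint (fun k => (hξ k).comap_le) hind.iIndep
      (Set.disjoint_singleton_right.2 (lt_irrefl m)))
    (le_iSup₂ (f := fun k (_ : k ∈ ({m} : Set ℕ)) => MeasurableSpace.comap (ξ k) inferInstance)
      m rfl)

lemma ae_abs_sum_range_le (hbdd : ∀ k, ∀ᵐ ω ∂P, |ξ k ω| ≤ 1) (m : ℕ) :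
    ∀ᵐ ω ∂P, |∑ k ∈ range m, ξ k ω| ≤ m := by
  filter_upwards [ae_all_iff.2 hbdd] with ω hω
  calc |∑ k ∈ range m, ξ k ω| ≤ ∑ k ∈ range m, |ξ k ω| := abs_sum_le_sum_abs _ _
    _ ≤ ∑ k ∈ range m, 1 := sum_le_sum fun k _ => hω k
    _ = m := by simp

lemma setIntegral_sum_range_succ_pow [IsFiniteMeasure P] (hξ : ∀ k, Measurable (ξ k))
    (hind : iIndepFun ξ P) (hbdd : ∀ k, ∀ᵐ ω ∂P, |ξ k ω| ≤ 1) (m n : ℕ) {s : Set Ω}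
    (hs : MeasurableSet[pastFiltration ξ hξ m] s) :
    ∫ ω in s, (∑ k ∈ range (m + 1), ξ k ω) ^ n ∂P
      = ∑ j ∈ range (n + 1), (∫ ω in s, (∑ k ∈ range m, ξ k ω) ^ j ∂P)
          * (∫ ω, ξ m ω ^ (n - j) ∂P) * n.choose j := by
  simp_rw [fun ω => sum_range_succ (fun k => ξ k ω) m]
  exact (indep_pastFiltration hξ hind m).setIntegral_add_pow ((pastFiltration ξ hξ).le m)
    (measurable_sum_range_pastFiltration hξ m) (hξ m) (ae_abs_sum_range_le hbdd m) (hbdd m) hs n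

lemma integral_pow_le_one [IsProbabilityMeasure P] {f : Ω → ℝ} (hf : ∀ᵐ ω ∂P, |f ω| ≤ 1)
    (j : ℕ) : ∫ ω, f ω ^ j ∂P ≤ 1 := by
  have hfj : ∀ᵐ ω ∂P, ‖f ω ^ j‖ ≤ 1 := by
    filter_upwards [hf] with ω hω
    rw [norm_pow, Real.norm_eq_abs]
    exact pow_le_one₀ (abs_nonneg _) hω
  simpa using (le_abs_self _).trans (norm_integral_le_of_norm_le_const hfj)

variable [IsProbabilityMeasure P]

lemma setIntegral_sum_range_succ_sq (hξ : ∀ k, Measurable (ξ k))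
    (hind : iIndepFun ξ P) (hbdd : ∀ k, ∀ᵐ ω ∂P, |ξ k ω| ≤ 1) (hmean : ∀ k, ∫ ω, ξ k ω ∂P = 0)
    (m : ℕ) {s : Set Ω} (hs : MeasurableSet[pastFiltration ξ hξ m] s) :
    ∫ ω in s, (∑ k ∈ range (m + 1), ξ k ω) ^ 2 ∂P
      = ∫ ω in s, (∑ k ∈ range m, ξ k ω) ^ 2 ∂P + P.real s * ∫ ω, ξ m ω ^ 2 ∂P := by
  rw [setIntegral_sum_range_succ_pow hξ hind hbdd m 2 hs]
  simp only [Nat.reduceAdd, sum_range_succ, range_one, sum_singleton, pow_zero, integral_const,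
    MeasurableSet.univ, measureReal_restrict_apply, Set.univ_inter, smul_eq_mul, mul_one, tsub_zero,
    Nat.choose_zero_right, Nat.cast_one, pow_one, Nat.add_one_sub_one, hmean, mul_zero,
    Nat.choose_succ_self_right, Nat.cast_ofNat, zero_mul, add_zero, tsub_self, probReal_univ,
    Nat.choose_self]
  ring

lemma setIntegral_sum_range_succ_pow_four (hξ : ∀ k, Measurable (ξ k))
    (hind : iIndepFun ξ P) (hbdd : ∀ k, ∀ᵐ ω ∂P, |ξ k ω| ≤ 1) (hmean : ∀ k, ∫ ω, ξ k ω ∂P = 0)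
    (hmean3 : ∀ k, ∫ ω, ξ k ω ^ 3 ∂P = 0) (m : ℕ) {s : Set Ω}
    (hs : MeasurableSet[pastFiltration ξ hξ m] s) :
    ∫ ω in s, (∑ k ∈ range (m + 1), ξ k ω) ^ 4 ∂P
      = ∫ ω in s, (∑ k ∈ range m, ξ k ω) ^ 4 ∂P
        + 6 * (∫ ω in s, (∑ k ∈ range m, ξ k ω) ^ 2 ∂P) * (∫ ω, ξ m ω ^ 2 ∂P)
        + P.real s * ∫ ω, ξ m ω ^ 4 ∂P := by
  rw [setIntegral_sum_range_succ_pow hξ hind hbdd m 4 hs]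
  simp only [Nat.reduceAdd, sum_range_succ, range_one, sum_singleton, pow_zero, integral_const,
    MeasurableSet.univ, measureReal_restrict_apply, Set.univ_inter, smul_eq_mul, mul_one, tsub_zero,
    Nat.choose, Nat.cast_one, pow_one, Nat.add_one_sub_one, hmean3, mul_zero, add_zero,
    Nat.cast_ofNat, zero_mul, Nat.reduceSub, hmean, tsub_self, probReal_univ]
  ring

lemma integral_sum_range_sq_le (hξ : ∀ k, Measurable (ξ k)) (hind : iIndepFun ξ P)
    (hbdd : ∀ k, ∀ᵐ ω ∂P, |ξ k ω| ≤ 1) (hmean : ∀ k, ∫ ω, ξ k ω ∂P = 0) (m : ℕ) :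
    ∫ ω, (∑ k ∈ range m, ξ k ω) ^ 2 ∂P ≤ m := by
  induction m with
  | zero => simp
  | succ m ih =>
    have h := setIntegral_sum_range_succ_sq hξ hind hbdd hmean m MeasurableSet.univ
    simp only [setIntegral_univ, probReal_univ, one_mul] at h
    push_cast
    linarith [integral_pow_le_one (hbdd m) 2]

lemma integral_sum_range_pow_four_le (hξ : ∀ k, Measurable (ξ k)) (hind : iIndepFun ξ P)
    (hbdd : ∀ k, ∀ᵐ ω ∂P, |ξ k ω| ≤ 1) (hmean : ∀ k, ∫ ω, ξ k ω ∂P = 0)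
    (hmean3 : ∀ k, ∫ ω, ξ k ω ^ 3 ∂P = 0) (m : ℕ) :
    ∫ ω, (∑ k ∈ range m, ξ k ω) ^ 4 ∂P ≤ 3 * m ^ 2 := by
  induction m with
  | zero => simp
  | succ m ih =>
    have h := setIntegral_sum_range_succ_pow_four hξ hind hbdd hmean hmean3 m MeasurableSet.univ
    simp only [setIntegral_univ, probReal_univ, one_mul] at h
    have hS2 := integral_sum_range_sq_le hξ hind hbdd hmean m
    have hS2' : 0 ≤ ∫ ω, (∑ k ∈ range m, ξ k ω) ^ 2 ∂P := integral_nonneg fun ω => by positivity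
    have hξ2 := integral_pow_le_one (hbdd m) 2
    have hξ2' : 0 ≤ ∫ ω, ξ m ω ^ 2 ∂P := integral_nonneg fun ω => by positivity
    push_cast
    nlinarith [mul_le_mul hS2 hξ2 hξ2' (Nat.cast_nonneg m), integral_pow_le_one (hbdd m) 4]

lemma submartingale_sum_range_pow_four (hξ : ∀ k, Measurable (ξ k)) (hind : iIndepFun ξ P)
    (hbdd : ∀ k, ∀ᵐ ω ∂P, |ξ k ω| ≤ 1) (hmean : ∀ k, ∫ ω, ξ k ω ∂P = 0)
    (hmean3 : ∀ k, ∫ ω, ξ k ω ^ 3 ∂P = 0) :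
    Submartingale (fun m ω => (∑ k ∈ range m, ξ k ω) ^ 4) (pastFiltration ξ hξ) P := by
  refine submartingale_of_setIntegral_le_succ
    (fun m => ((measurable_sum_range_pastFiltration hξ m).pow_const 4).stronglyMeasurable)
    (fun m => ?_) fun m s hs => ?_
  · refine Integrable.of_bound (by fun_prop) ((m : ℝ) ^ 4) ?_
    filter_upwards [ae_abs_sum_range_le hbdd m] with ω hω
    rw [Real.norm_eq_abs, abs_pow]
    exact pow_le_pow_left₀ (abs_nonneg _) hω 4
  · rw [setIntegral_sum_range_succ_pow_four hξ hind hbdd hmean hmean3 m hs]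
    have hS2 : 0 ≤ ∫ ω in s, (∑ k ∈ range m, ξ k ω) ^ 2 ∂P := integral_nonneg fun ω => by positivity
    have hξ2 : 0 ≤ ∫ ω, ξ m ω ^ 2 ∂P := integral_nonneg fun ω => by positivity
    have hξ4 : 0 ≤ ∫ ω, ξ m ω ^ 4 ∂P := integral_nonneg fun ω => by positivity
    nlinarith [mul_nonneg hS2 hξ2, mul_nonneg (measureReal_nonneg (μ := P) (s := s)) hξ4]

lemma measure_exists_abs_sum_range_gt_le (hξ : ∀ k, Measurable (ξ k)) (hind : iIndepFun ξ P)
    (hbdd : ∀ k, ∀ᵐ ω ∂P, |ξ k ω| ≤ 1) (hmean : ∀ k, ∫ ω, ξ k ω ∂P = 0)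
    (hmean3 : ∀ k, ∫ ω, ξ k ω ^ 3 ∂P = 0) (q : ℕ) {x : ℝ} (hx : 0 < x) :
    P {ω | ∃ m ≤ q, x < |∑ k ∈ range m, ξ k ω|} ≤ ENNReal.ofReal (3 * q ^ 2 / x ^ 4) := by
  have hsub := submartingale_sum_range_pow_four hξ hind hbdd hmean hmean3
  set B := {ω | ((x ^ 4).toNNReal : ℝ) ≤
    (range (q + 1)).sup' nonempty_range_add_one fun k => (∑ j ∈ range k, ξ j ω) ^ 4}
  have hAB : {ω | ∃ m ≤ q, x < |∑ k ∈ range m, ξ k ω|} ⊆ B := by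
    rintro ω ⟨m, hm, hxm⟩
    simp only [B, Set.mem_ofPred_eq, Real.coe_toNNReal _ (show 0 ≤ x ^ 4 by positivity)]
    refine le_trans ?_ (le_sup' (fun k => (∑ j ∈ range k, ξ j ω) ^ 4)
      (mem_range.2 (Nat.lt_succ_of_le hm)))
    exact (pow_le_pow_left₀ hx.le hxm.le 4).trans_eq (Even.pow_abs ⟨2, rfl⟩ _)
  have hB : ENNReal.ofReal (x ^ 4) * P B ≤ ENNReal.ofReal (3 * q ^ 2) := by
    have hmax := maximal_ineq hsub (fun m ω => by positivity) (ε := (x ^ 4).toNNReal) q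
    refine hmax.trans (ENNReal.ofReal_le_ofReal ?_)
    exact (setIntegral_le_integral (hsub.integrable q) (ae_of_all _ fun ω => by positivity)).trans
      (integral_sum_range_pow_four_le hξ hind hbdd hmean hmean3 q)
  calc P {ω | ∃ m ≤ q, x < |∑ k ∈ range m, ξ k ω|} ≤ P B := measure_mono hAB
    _ ≤ ENNReal.ofReal (3 * q ^ 2) / ENNReal.ofReal (x ^ 4) := by
      rw [ENNReal.le_div_iff_mul_le (by simp [hx]) (by simp), mul_comm]
      exact hB
    _ = ENNReal.ofReal (3 * q ^ 2 / x ^ 4) := (ENNReal.ofReal_div_of_pos (by positivity)).symm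

end RandomWalk

section Poisson

lemma poissonMeasure_real_singleton_succ (r : NNReal) (k : ℕ) :
    (k + 1) * (poissonMeasure r).real {k + 1} = r * (poissonMeasure r).real {k} := by
  rw [poissonMeasure_real_singleton, poissonMeasure_real_singleton, Nat.factorial_succ]
  push_cast
  field_simp
  ring

lemma hasSum_mul_poissonMeasure_real {r : NNReal} {g : ℕ → ℝ} {a : ℝ}
    (h : HasSum (fun k => r * (poissonMeasure r).real {k} * g (k + 1)) a) :
    HasSum (fun k : ℕ => k * (poissonMeasure r).real {k} * g k) a := by
  have hshift :
      HasSum (fun k : ℕ => ((k + 1 : ℕ) : ℝ) * (poissonMeasure r).real {k + 1} * g (k + 1)) a := by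
    refine h.congr_fun fun k => ?_
    push_cast
    rw [poissonMeasure_real_singleton_succ]
  simpa using (hasSum_nat_add_iff
    (f := fun k : ℕ => (k : ℝ) * (poissonMeasure r).real {k} * g k) 1).mp hshift

lemma hasSum_sq_mul_poissonMeasure_real (r : NNReal) :
    HasSum (fun k : ℕ => (k : ℝ) ^ 2 * (poissonMeasure r).real {k}) (r ^ 2 + r) := by
  have hone : HasSum (fun k => (poissonMeasure r).real {k}) 1 := by
    simpa only [poissonMeasure_real_singleton] using hasSum_one_poissonMeasure r
  have hmean : HasSum (fun k : ℕ => k * (poissonMeasure r).real {k} * 1) r :=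
    hasSum_mul_poissonMeasure_real (by simpa using hone.mul_left (r : ℝ))
  have hsq : HasSum (fun k : ℕ => k * (poissonMeasure r).real {k} * k) (r * (r + 1)) :=
    hasSum_mul_poissonMeasure_real <| ((hmean.add hone).mul_left (r : ℝ)).congr_fun fun k => by
      push_cast; ring
  convert hsq using 1
  · funext k; ring
  · ring

lemma lintegral_sq_poissonMeasure (r : NNReal) {c : ℝ} (hc : 0 ≤ c) :
    ∫⁻ k, ENNReal.ofReal (c * (k : ℝ) ^ 2) ∂poissonMeasure r
      = ENNReal.ofReal (c * (r ^ 2 + r)) := by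
  have hsum := (hasSum_sq_mul_poissonMeasure_real r).mul_left c
  rw [lintegral_countable', ← hsum.tsum_eq,
    ENNReal.ofReal_tsum_of_nonneg (fun k => by positivity) hsum.summable]
  refine tsum_congr fun k => ?_
  rw [← ofReal_measureReal, ← ENNReal.ofReal_mul (by positivity), mul_assoc]

set_option linter.deprecated false in
lemma toMeasure_poissonPMF (r : NNReal) : (poissonPMF r).toMeasure = poissonMeasure r :=
  Measure.ext_of_singleton fun k => by
    rw [PMF.toMeasure_apply_singleton _ _ (measurableSet_singleton k), poissonMeasure_singleton,
      ← poissonPMFReal_ofReal_eq_poissonPMF, poissonPMFReal]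

end Poisson

section Rademacher

variable {Ω : Type*} {mΩ : MeasurableSpace Ω} {P : Measure Ω} [IsProbabilityMeasure P]
  {Z : Ω → ℤ}

lemma ae_eq_one_or_eq_neg_one (hZ : Measurable Z) (h1 : P {ω | Z ω = 1} = 1 / 2)
    (h2 : P {ω | Z ω = -1} = 1 / 2) : ∀ᵐ ω ∂P, Z ω = 1 ∨ Z ω = -1 := by
  have hA : MeasurableSet {ω | Z ω = 1} := hZ (measurableSet_singleton 1)
  have hB : MeasurableSet {ω | Z ω = -1} := hZ (measurableSet_singleton (-1))
  have hAB : Disjoint {ω | Z ω = 1} {ω | Z ω = -1} :=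
    Set.disjoint_left.2 fun ω h h' => by simp_all
  have hunion : P ({ω | Z ω = 1} ∪ {ω | Z ω = -1}) = 1 := by
    rw [measure_union hAB hB, h1, h2, ENNReal.add_halves]
  exact mem_ae_iff.2 ((prob_compl_eq_zero_iff (hA.union hB)).2 hunion)

lemma integral_odd_pow_eq_zero (hZ : Measurable Z) (h1 : P {ω | Z ω = 1} = 1 / 2)
    (h2 : P {ω | Z ω = -1} = 1 / 2) {k : ℕ} (hk : Odd k) : ∫ ω, (Z ω : ℝ) ^ k ∂P = 0 := by
  have hA : MeasurableSet {ω | Z ω = 1} := hZ (measurableSet_singleton 1)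
  have hB : MeasurableSet {ω | Z ω = -1} := hZ (measurableSet_singleton (-1))
  have hae : (fun ω => (Z ω : ℝ) ^ k)
      =ᵐ[P] fun ω => {ω | Z ω = 1}.indicator 1 ω - {ω | Z ω = -1}.indicator (1 : Ω → ℝ) ω := by
    filter_upwards [ae_eq_one_or_eq_neg_one hZ h1 h2] with ω hω
    rcases hω with h | h <;> simp [h, hk.neg_one_pow, Set.indicator]
  rw [integral_congr_ae hae, integral_sub ((integrable_const 1).indicator hA)
    ((integrable_const 1).indicator hB), integral_indicator_one hA, integral_indicator_one hB,
    measureReal_def, measureReal_def, h1, h2, sub_self]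

end Rademacher

section Conditioning

variable {Ω ι β : Type*} {mΩ : MeasurableSpace Ω} {P : Measure Ω} [Countable ι]
  [MeasurableSpace ι] [MeasurableSingletonClass ι]

lemma ProbabilityTheory.IndepFun.measure_mem_eq_tsum [MeasurableSpace β] {Z : Ω → ι} {Y : Ω → β}
    (hZ : Measurable Z) (hY : Measurable Y) (hZY : IndepFun Z Y P) {B : ι → Set β}
    (hB : ∀ i, MeasurableSet (B i)) :
    P {ω | Y ω ∈ B (Z ω)} = ∑' i, P (Z ⁻¹' {i}) * P (Y ⁻¹' B i) := by
  have hunion : {ω | Y ω ∈ B (Z ω)} = ⋃ i, Z ⁻¹' {i} ∩ Y ⁻¹' B i := by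
    ext ω; simp
  have hdisj : Pairwise (Function.onFun Disjoint fun i => Z ⁻¹' {i} ∩ Y ⁻¹' B i) :=
    fun i j hij => Set.disjoint_left.2 fun ω hi hj => hij (hi.1.symm.trans hj.1)
  rw [hunion, measure_iUnion hdisj fun i => (hZ (measurableSet_singleton i)).inter (hY (hB i))]
  exact tsum_congr fun i => hZY.measure_inter_preimage_eq_mul _ _ (measurableSet_singleton i) (hB i)

lemma lintegral_comp_eq_tsum {Z : Ω → ι} (hZ : Measurable Z) (g : ι → ENNReal) :
    ∫⁻ ω, g (Z ω) ∂P = ∑' i, P (Z ⁻¹' {i}) * g i := by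
  rw [← lintegral_map (measurable_of_countable g) hZ, lintegral_countable']
  exact tsum_congr fun i => by rw [Measure.map_apply hZ (measurableSet_singleton i), mul_comm]

end Conditioning

section InterchangeWalk

/-- The walk `j ↦ ∑_{k<j} X k`, run at the jump times of `N`, moves more than `x` away from its
position at time `u` by time `v`. -/
def walkDeviationEvent {Ω : Type*} (N : ℝ → Ω → ℕ) (X : ℕ → Ω → ℤ) (u v x : ℝ) : Set Ω :=
  {ω | ∃ m ≤ N v ω - N u ω, x < |∑ k ∈ range m, (X (N u ω + k) ω : ℝ)|}

variable {Ω : Type*} {mΩ : MeasurableSpace Ω} {P : Measure Ω} [IsProbabilityMeasure P]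
  {X : ℕ → Ω → ℤ}

lemma measure_exists_abs_sum_shift_gt_le (hXmeas : ∀ j, Measurable (X j))
    (hXindep : iIndepFun X P)
    (hXdist : ∀ j, P {ω | X j ω = 1} = 1/2 ∧ P {ω | X j ω = -1} = 1/2) (p q : ℕ) {x : ℝ}
    (hx : 0 < x) :
    P {ω | ∃ m ≤ q, x < |∑ k ∈ range m, (X (p + k) ω : ℝ)|} ≤ ENNReal.ofReal (3 * q ^ 2 / x ^ 4) :=
  measure_exists_abs_sum_range_gt_le (ξ := fun k ω => (X (p + k) ω : ℝ))
    (fun k => (measurable_of_countable _).comp (hXmeas _))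
    ((hXindep.precomp (add_right_injective p)).comp (fun _ => Int.cast)
      fun _ => measurable_of_countable _)
    (fun k => by
      filter_upwards [ae_eq_one_or_eq_neg_one (hXmeas (p + k)) (hXdist _).1 (hXdist _).2]
        with ω hω
      rcases hω with h | h <;> simp [h])
    (fun k => by
      simpa using integral_odd_pow_eq_zero (hXmeas (p + k)) (hXdist _).1 (hXdist _).2 odd_one)
    (fun k => integral_odd_pow_eq_zero (hXmeas (p + k)) (hXdist _).1 (hXdist _).2 (by decide))
    q hx

lemma measure_walkDeviationEvent_le {N : ℝ → Ω → ℕ} (hN : IsPoissonProcess P 1 N)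
    (hXmeas : ∀ j, Measurable (X j)) (hXindep : iIndepFun X P)
    (hXdist : ∀ j, P {ω | X j ω = 1} = 1/2 ∧ P {ω | X j ω = -1} = 1/2)
    (hNX : IndepFun (fun ω => fun t : ℝ => N t ω) (fun ω => fun j : ℕ => X j ω) P)
    {u v : ℝ} (hu : 0 ≤ u) (huv : u ≤ v) {x : ℝ} (hx : 0 < x) :
    P (walkDeviationEvent N X u v x) ≤ ENNReal.ofReal (3 * ((v - u) ^ 2 + (v - u)) / x ^ 4) := by
  obtain ⟨-, -, hNmeas, hNlaw, -⟩ := hN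
  let Z : Ω → ℕ × ℕ := fun ω => (N u ω, N v ω - N u ω)
  let B : ℕ × ℕ → Set (ℕ → ℤ) := fun z => {ψ | ∃ m ≤ z.2, x < |∑ k ∈ range m, (ψ (z.1 + k) : ℝ)|}
  let g : ℕ → ENNReal := fun d => ENNReal.ofReal (3 / x ^ 4 * (d : ℝ) ^ 2)
  have hD : Measurable fun ω => N v ω - N u ω := (hNmeas v).sub (hNmeas u)
  have hZY : IndepFun Z (fun ω j => X j ω) P :=
    hNX.comp (φ := fun φ => (φ u, φ v - φ u)) (by fun_prop) measurable_id
  have hB : ∀ z, MeasurableSet (B z) := fun z => by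
    simp only [B, Set.ofPred_exists]
    measurability
  have hBz : ∀ z, P ((fun ω j => X j ω) ⁻¹' B z) ≤ g z.2 := fun z =>
    (measure_exists_abs_sum_shift_gt_le hXmeas hXindep hXdist z.1 z.2 hx).trans_eq
      (by simp only [g]; ring_nf)
  have hlaw : Measure.map (fun ω => N v ω - N u ω) P = poissonMeasure (v - u).toNNReal := by
    rw [hNlaw u v hu huv, one_mul, toMeasure_poissonPMF]
  calc P (walkDeviationEvent N X u v x)
      = ∑' z, P (Z ⁻¹' {z}) * P ((fun ω j => X j ω) ⁻¹' B z) :=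
        hZY.measure_mem_eq_tsum ((hNmeas u).prodMk hD) (measurable_pi_lambda _ hXmeas) hB
    _ ≤ ∑' z, P (Z ⁻¹' {z}) * g z.2 := ENNReal.tsum_le_tsum fun z => by gcongr; exact hBz z
    _ = ∫⁻ ω, g (N v ω - N u ω) ∂P := (lintegral_comp_eq_tsum ((hNmeas u).prodMk hD) _).symm
    _ = ∫⁻ d, g d ∂poissonMeasure (v - u).toNNReal := by
        rw [← hlaw, lintegral_map (measurable_of_countable g) hD]
    _ = ENNReal.ofReal (3 * ((v - u) ^ 2 + (v - u)) / x ^ 4) := by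
        rw [lintegral_sq_poissonMeasure _ (by positivity), Real.coe_toNNReal _ (by linarith)]
        ring_nf

end InterchangeWalk

lemma exists_nat_window_of_abs_sub_le {T δ s t : ℝ} (hδ : 0 < δ) (hs : s ∈ Set.Icc 0 T)
    (ht : t ∈ Set.Icc 0 T) (hst : |s - t| ≤ δ) :
    ∃ k < ⌊T / δ⌋₊ + 1, k * δ ≤ s ∧ k * δ ≤ t ∧ s ≤ (k + 2) * δ ∧ t ≤ (k + 2) * δ := by
  have hmin : 0 ≤ min s t / δ := div_nonneg (le_min hs.1 ht.1) hδ.le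
  refine ⟨⌊min s t / δ⌋₊, Nat.lt_succ_of_le (Nat.floor_mono (div_le_div_of_nonneg_right
    ((min_le_left s t).trans hs.2) hδ.le)), ?_⟩
  have hlo : ⌊min s t / δ⌋₊ * δ ≤ min s t := (le_div_iff₀ hδ).1 (Nat.floor_le hmin)
  have hhi : min s t < (⌊min s t / δ⌋₊ + 1) * δ := (div_lt_iff₀ hδ).1 (Nat.lt_floor_add_one _)
  have := abs_le.1 hst
  refine ⟨hlo.trans (min_le_left s t), hlo.trans (min_le_right s t), ?_, ?_⟩ <;>
    cases min_choice s t <;> nlinarith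

lemma exists_abs_sum_shift_gt_of_lt_abs_sub {a : ℕ → ℝ} {p m₁ m₂ q : ℕ} (h₁ : p ≤ m₁) (h₁q : m₁ ≤ q)
    (h₂ : p ≤ m₂) (h₂q : m₂ ≤ q) {x : ℝ}
    (h : 2 * x < |∑ j ∈ range m₂, a j - ∑ j ∈ range m₁, a j|) :
    ∃ m ≤ q - p, x < |∑ k ∈ range m, a (p + k)| := by
  have hsplit : ∀ m, p ≤ m →
      ∑ j ∈ range m, a j = ∑ j ∈ range p, a j + ∑ k ∈ range (m - p), a (p + k) :=
    fun m hm => by rw [← sum_range_add, Nat.add_sub_cancel' hm]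
  by_contra! hle
  have hm₁ := hle (m₁ - p) (by omega)
  have hm₂ := hle (m₂ - p) (by omega)
  rw [hsplit m₁ h₁, hsplit m₂ h₂, add_sub_add_left_eq_sub] at h
  linarith [abs_sub (∑ k ∈ range (m₂ - p), a (p + k)) (∑ k ∈ range (m₁ - p), a (p + k))]

lemma abs_foldPath_div_sub_le {n : ℕ} (hn : 0 < n) (i a b : ℤ) :
    |(foldPath n (i + a) : ℝ) / n - foldPath n (i + b) / n| ≤ |(a : ℝ) - b| / n := by
  have h := abs_foldPath_sub_le n hn (i + a) (i + b)
  rw [add_sub_add_left_eq_sub] at h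
  rw [← sub_div, abs_div, Nat.abs_cast]
  exact div_le_div_of_nonneg_right (by exact_mod_cast h) (Nat.cast_nonneg n)

lemma setOf_lt_modulus_subset_biUnion_walkDeviationEvent {Ω : Type*} {N : ℝ → Ω → ℕ} {X : ℕ → Ω → ℤ}
    (hNmono : ∀ ω, Monotone fun t => N t ω) {n : ℕ} (hn : 0 < n) {Tn : ℤ → ℝ → Ω → ℝ}
    (hTn : ∀ i s ω, Tn i s ω =
      (foldPath n (i + ∑ j ∈ Finset.range (N ((n : ℝ) ^ 2 * s) ω), X j ω) : ℝ) / n)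
    (i : ℤ) {T δ c : ℝ} (hδ : 0 < δ) (hc : 0 ≤ c) :
    {ω | 2 * c < ⨆ p : {p : ℝ × ℝ //
          p.1 ∈ Set.Icc 0 T ∧ p.2 ∈ Set.Icc 0 T ∧ |p.1 - p.2| ≤ δ},
        |Tn i p.1.1 ω - Tn i p.1.2 ω|}
      ⊆ ⋃ k ∈ range (⌊T / δ⌋₊ + 1),
          walkDeviationEvent N X (n ^ 2 * (k * δ)) (n ^ 2 * ((k + 2) * δ)) (c * n) := by
  intro ω hω
  obtain ⟨⟨⟨s, t⟩, hs, ht, hst⟩, hlt⟩ : ∃ p : {p : ℝ × ℝ //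
      p.1 ∈ Set.Icc 0 T ∧ p.2 ∈ Set.Icc 0 T ∧ |p.1 - p.2| ≤ δ},
      2 * c < |Tn i p.1.1 ω - Tn i p.1.2 ω| := by
    by_contra! h
    exact (Real.iSup_le h (by positivity)).not_gt hω
  obtain ⟨k, hk, hks, hkt, hsk, htk⟩ := exists_nat_window_of_abs_sub_le hδ hs ht hst
  have hmono : ∀ {a b : ℝ}, a ≤ b → N ((n : ℝ) ^ 2 * a) ω ≤ N ((n : ℝ) ^ 2 * b) ω :=
    fun hab => hNmono ω (by gcongr)
  have hn' : (0 : ℝ) < n := by exact_mod_cast hn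
  refine Set.mem_biUnion (mem_range.2 hk) (exists_abs_sum_shift_gt_of_lt_abs_sub
    (a := fun j => (X j ω : ℝ)) (hmono hkt) (hmono htk) (hmono hks) (hmono hsk) ?_)
  rw [hTn, hTn] at hlt
  have key := hlt.trans_le (abs_foldPath_div_sub_le hn i _ _)
  rw [lt_div_iff₀ hn'] at key
  push_cast at key
  linarith

lemma window_count_mul_window_bound_le {n : ℕ} (hn : 0 < n) {T δ : ℝ} (hT : 1 ≤ T) (hδ : 0 < δ)
    (hδ1 : δ ≤ 1) :
    (⌊T / δ⌋₊ + 1 : ℕ) * (3 * ((2 * n ^ 2 * δ) ^ 2 + 2 * n ^ 2 * δ) / (δ ^ ((1 : ℝ) / 8) * n) ^ 4)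
      ≤ 2 ^ 7 * T * (δ ^ ((1 : ℝ) / 2) + δ ^ (-(1 : ℝ) / 2) / n ^ 2) := by
  have hn' : (0 : ℝ) < n := by exact_mod_cast hn
  set r := δ ^ ((1 : ℝ) / 2) with hr
  have hr0 : 0 < r := Real.rpow_pos_of_pos hδ _
  have hrr : δ = r * r := by rw [hr, ← Real.rpow_add hδ]; norm_num
  have hx4 : (δ ^ ((1 : ℝ) / 8) * n) ^ 4 = r * n ^ 4 := by
    rw [mul_pow, ← Real.rpow_natCast, ← Real.rpow_mul hδ.le]
    norm_num [hr]
  have hneg : δ ^ (-(1 : ℝ) / 2) = r⁻¹ := by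
    rw [hr, ← Real.rpow_neg hδ.le]
    norm_num
  have hK : ((⌊T / δ⌋₊ + 1 : ℕ) : ℝ) ≤ 2 * T / δ := by
    have h1 : 1 ≤ T / δ := (one_le_div hδ).2 (hδ1.trans hT)
    have h2 : 2 * T / δ = T / δ + T / δ := by ring
    push_cast
    linarith [Nat.floor_le (h1.trans' zero_le_one)]
  calc _ ≤ 2 * T / δ
        * (3 * ((2 * n ^ 2 * δ) ^ 2 + 2 * n ^ 2 * δ) / (δ ^ ((1 : ℝ) / 8) * n) ^ 4) := by
        gcongr
    _ = 24 * T * r + 12 * T * (r⁻¹ / n ^ 2) := by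
        rw [hx4, hrr]
        field_simp
        ring
    _ ≤ 2 ^ 7 * T * (r + δ ^ (-(1 : ℝ) / 2) / n ^ 2) := by
        rw [hneg]
        nlinarith [show 0 ≤ T * r by positivity, show 0 ≤ T * (r⁻¹ / n ^ 2) by positivity]

/-- Let `T^n_i` be the rescaled trajectory of particle `i` in the interchange process on
the path of length `n`; it has the law of `(π_n(S_i(n²t))/n; t ≥ 0)` where `S_i` is a
continuous-time rate-1 simple random walk on `ℤ` started at `i`. With
`m_i(δ) = sup_{s,t ∈ [0,T], |s−t| ≤ δ} |T^n_i(t) − T^n_i(s)|`, one has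
`max_{1 ≤ i ≤ n} P(m_i(δ) > 2δ^{1/8}) ≤ 2⁷ T (δ^{1/2} + δ^{−1/2}/n²)`
for `T ≥ 1` and `0 < δ ≤ 1`. -/
theorem rescaled_trajectory_modulus_bound
    {Ω : Type*} [MeasurableSpace Ω] (P : Measure Ω) [IsProbabilityMeasure P]
    (n : ℕ) (hn : 0 < n)
    (N : ℝ → Ω → ℕ) (X : ℕ → Ω → ℤ)
    (hN : IsPoissonProcess P 1 N)
    (hXmeas : ∀ j, Measurable (X j))
    (hXindep : iIndepFun X P)
    (hXdist : ∀ j, P {ω | X j ω = 1} = 1/2 ∧ P {ω | X j ω = -1} = 1/2)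
    (hNX : IndepFun (fun ω => fun t : ℝ => N t ω) (fun ω => fun j : ℕ => X j ω) P)
    (Tn : ℤ → ℝ → Ω → ℝ)
    (hTn : ∀ i s ω, Tn i s ω =
      (foldPath n (i + ∑ j ∈ Finset.range (N ((n : ℝ) ^ 2 * s) ω), X j ω) : ℝ) / n)
    (T δ : ℝ) (hT : 1 ≤ T) (hδ : 0 < δ) (hδ1 : δ ≤ 1) :
    ∀ i : ℤ, 1 ≤ i → i ≤ n →
      (P {ω | (⨆ p : {p : ℝ × ℝ //
            p.1 ∈ Set.Icc 0 T ∧ p.2 ∈ Set.Icc 0 T ∧ |p.1 - p.2| ≤ δ},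
          |Tn i p.1.1 ω - Tn i p.1.2 ω|) > 2 * δ ^ ((1 : ℝ) / 8)}).toReal
        ≤ 2 ^ 7 * T * (δ ^ ((1 : ℝ) / 2) + δ ^ (-(1 : ℝ) / 2) / n ^ 2) := by
  intro i _ _
  set x := δ ^ ((1 : ℝ) / 8) * n
  have hx : 0 < x := mul_pos (Real.rpow_pos_of_pos hδ _) (by exact_mod_cast hn)
  set b := 3 * ((2 * n ^ 2 * δ) ^ 2 + 2 * n ^ 2 * δ) / x ^ 4 with hb
  have hwindow : ∀ k : ℕ,
      P (walkDeviationEvent N X (n ^ 2 * (k * δ)) (n ^ 2 * ((k + 2) * δ)) x) ≤ ENNReal.ofReal b :=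
    fun k => (measure_walkDeviationEvent_le hN hXmeas hXindep hXdist hNX (by positivity)
      (by gcongr; linarith) hx).trans_eq (by rw [hb]; ring_nf)
  refine ENNReal.toReal_le_of_le_ofReal (by positivity) ?_
  calc P _ ≤ ∑ k ∈ range (⌊T / δ⌋₊ + 1),
        P (walkDeviationEvent N X (n ^ 2 * (k * δ)) (n ^ 2 * ((k + 2) * δ)) x) :=
      (measure_mono (setOf_lt_modulus_subset_biUnion_walkDeviationEvent hN.2.1 hn hTn i hδ
        (by positivity))).trans (measure_biUnion_finset_le _ _)
    _ ≤ ∑ k ∈ range (⌊T / δ⌋₊ + 1), ENNReal.ofReal b := sum_le_sum fun k _ => hwindow k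
    _ = ENNReal.ofReal ((⌊T / δ⌋₊ + 1 : ℕ) * b) := by
      rw [sum_const, card_range, nsmul_eq_mul, ENNReal.ofReal_mul (by positivity),
        ENNReal.ofReal_natCast]
    _ ≤ _ := ENNReal.ofReal_le_ofReal (window_count_mul_window_bound_le hn hT hδ hδ1)
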